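/- Let X be a real Banach space. For ε ∈ [0,2]: φ⁺_X(ε) ≤ γ⁺_X(ε) ≤ 2·φ⁺_X(ε), where φ⁺_X(ε) = sup{p(x − z) : x, z ∈ S, ‖x − z‖ ≤ ε, p ∈ J₁(x)} and γ⁺_X(ε) = sup{(p₁ − p₂)(x₁ − x₂) : x₁, x₂ ∈ S, ‖x₁ − x₂‖ ≤ ε, p₁ ∈ J₁(x₁), p₂ ∈ J₁(x₂)}. -/

import Mathlib

noncomputable def phiPlus (X : Type*) [NormedAddCommGroup X] [NormedSpace ℝ X] (ε : ℝ) : ℝ :=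
  sSup {r : ℝ | ∃ (x z : X) (p : X →L[ℝ] ℝ), ‖x‖ = 1 ∧ ‖z‖ = 1 ∧ ‖x - z‖ ≤ ε ∧
    ‖p‖ = 1 ∧ p x = 1 ∧ r = p (x - z)}

noncomputable def gammaPlus (X : Type*) [NormedAddCommGroup X] [NormedSpace ℝ X] (ε : ℝ) : ℝ :=
  sSup {r : ℝ | ∃ (x₁ x₂ : X) (p₁ p₂ : X →L[ℝ] ℝ), ‖x₁‖ = 1 ∧ ‖x₂‖ = 1 ∧ ‖x₁ - x₂‖ ≤ ε ∧
    ‖p₁‖ = 1 ∧ p₁ x₁ = 1 ∧ ‖p₂‖ = 1 ∧ p₂ x₂ = 1 ∧ r = (p₁ - p₂) (x₁ - x₂)}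

/-! For `p ∈ J₁(x)` and `‖z‖ ≤ 1` we have `p (x - z) = 1 - p z ∈ [0, 2]`, so both suprema are
taken over bounded sets of nonnegative reals (an empty set giving `sSup ∅ = 0`). For the lower bound,
Hahn–Banach gives `q ∈ J₁(z)`, and `(p - q) (x - z) = p (x - z) + q (z - x) ≥ p (x - z)`. The upper
bound is the splitting `(p₁ - p₂) (x₁ - x₂) = p₁ (x₁ - x₂) + p₂ (x₂ - x₁)`. -/

section NormingFunctional

variable {X : Type*} [SeminormedAddCommGroup X] [NormedSpace ℝ X] {p : StrongDual ℝ X} {x z : X}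

theorem abs_apply_le_one (hp : ‖p‖ ≤ 1) (hz : ‖z‖ ≤ 1) : |p z| ≤ 1 :=
  (p.unit_le_opNorm z hz).trans hp

theorem apply_sub_nonneg_of_apply_eq_one (hp : ‖p‖ ≤ 1) (hpx : p x = 1) (hz : ‖z‖ ≤ 1) :
    0 ≤ p (x - z) := by
  rw [map_sub, hpx]
  linarith [(abs_le.mp (abs_apply_le_one hp hz)).2]

theorem apply_sub_le_two_of_apply_eq_one (hp : ‖p‖ ≤ 1) (hpx : p x = 1) (hz : ‖z‖ ≤ 1) :
    p (x - z) ≤ 2 := by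
  rw [map_sub, hpx]
  linarith [(abs_le.mp (abs_apply_le_one hp hz)).1]

theorem exists_norm_eq_one_apply_eq_one (hz : ‖z‖ = 1) :
    ∃ q : StrongDual ℝ X, ‖q‖ = 1 ∧ q z = 1 := by
  obtain ⟨q, hq, hqz⟩ := exists_dual_vector ℝ z (by rw [hz]; exact one_ne_zero)
  exact ⟨q, hq, by rw [hqz, hz, RCLike.ofReal_one]⟩

theorem sub_apply_sub_eq_add (p₁ p₂ : StrongDual ℝ X) (x₁ x₂ : X) :
    (p₁ - p₂) (x₁ - x₂) = p₁ (x₁ - x₂) + p₂ (x₂ - x₁) := by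
  simp only [sub_apply, map_sub]
  ring

end NormingFunctional

section Moduli

variable {X : Type*} [NormedAddCommGroup X] [NormedSpace ℝ X] {ε : ℝ}

theorem phiPlus_nonneg : 0 ≤ phiPlus X ε :=
  Real.sSup_nonneg <| by
    rintro _ ⟨x, z, p, -, hz, -, hp, hpx, rfl⟩
    exact apply_sub_nonneg_of_apply_eq_one hp.le hpx hz.le

theorem le_phiPlus {x z : X} {p : StrongDual ℝ X} (hx : ‖x‖ = 1) (hz : ‖z‖ = 1)
    (hxz : ‖x - z‖ ≤ ε) (hp : ‖p‖ = 1) (hpx : p x = 1) : p (x - z) ≤ phiPlus X ε := by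
  refine le_csSup ⟨2, ?_⟩ ⟨x, z, p, hx, hz, hxz, hp, hpx, rfl⟩
  rintro _ ⟨x, z, p, -, hz, -, hp, hpx, rfl⟩
  exact apply_sub_le_two_of_apply_eq_one hp.le hpx hz.le

theorem phiPlus_le {c : ℝ} (hc : 0 ≤ c)
    (h : ∀ (x z : X) (p : StrongDual ℝ X), ‖x‖ = 1 → ‖z‖ = 1 → ‖x - z‖ ≤ ε → ‖p‖ = 1 →
      p x = 1 → p (x - z) ≤ c) :
    phiPlus X ε ≤ c :=
  Real.sSup_le (by rintro _ ⟨x, z, p, hx, hz, hxz, hp, hpx, rfl⟩; exact h x z p hx hz hxz hp hpx) hc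

theorem gammaPlus_nonneg : 0 ≤ gammaPlus X ε :=
  Real.sSup_nonneg <| by
    rintro _ ⟨x₁, x₂, p₁, p₂, hx₁, hx₂, -, hp₁, hp₁x, hp₂, hp₂x, rfl⟩
    rw [sub_apply_sub_eq_add]
    exact add_nonneg (apply_sub_nonneg_of_apply_eq_one hp₁.le hp₁x hx₂.le)
      (apply_sub_nonneg_of_apply_eq_one hp₂.le hp₂x hx₁.le)

theorem le_gammaPlus {x₁ x₂ : X} {p₁ p₂ : StrongDual ℝ X} (hx₁ : ‖x₁‖ = 1) (hx₂ : ‖x₂‖ = 1)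
    (hxx : ‖x₁ - x₂‖ ≤ ε) (hp₁ : ‖p₁‖ = 1) (hp₁x : p₁ x₁ = 1) (hp₂ : ‖p₂‖ = 1)
    (hp₂x : p₂ x₂ = 1) : (p₁ - p₂) (x₁ - x₂) ≤ gammaPlus X ε := by
  refine le_csSup ⟨2 + 2, ?_⟩ ⟨x₁, x₂, p₁, p₂, hx₁, hx₂, hxx, hp₁, hp₁x, hp₂, hp₂x, rfl⟩
  rintro _ ⟨x₁, x₂, p₁, p₂, hx₁, hx₂, -, hp₁, hp₁x, hp₂, hp₂x, rfl⟩
  rw [sub_apply_sub_eq_add]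
  exact add_le_add (apply_sub_le_two_of_apply_eq_one hp₁.le hp₁x hx₂.le)
    (apply_sub_le_two_of_apply_eq_one hp₂.le hp₂x hx₁.le)

theorem gammaPlus_le {c : ℝ} (hc : 0 ≤ c)
    (h : ∀ (x₁ x₂ : X) (p₁ p₂ : StrongDual ℝ X), ‖x₁‖ = 1 → ‖x₂‖ = 1 → ‖x₁ - x₂‖ ≤ ε →
      ‖p₁‖ = 1 → p₁ x₁ = 1 → ‖p₂‖ = 1 → p₂ x₂ = 1 → (p₁ - p₂) (x₁ - x₂) ≤ c) :
    gammaPlus X ε ≤ c :=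
  Real.sSup_le (by
    rintro _ ⟨x₁, x₂, p₁, p₂, hx₁, hx₂, hxx, hp₁, hp₁x, hp₂, hp₂x, rfl⟩
    exact h x₁ x₂ p₁ p₂ hx₁ hx₂ hxx hp₁ hp₁x hp₂ hp₂x) hc

end Moduli

theorem stmt16_general {X : Type*} [NormedAddCommGroup X] [NormedSpace ℝ X]
    (ε : ℝ) :
    phiPlus X ε ≤ gammaPlus X ε ∧ gammaPlus X ε ≤ 2 * phiPlus X ε := by
  constructor
  · refine phiPlus_le gammaPlus_nonneg fun x z p hx hz hxz hp hpx => ?_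
    obtain ⟨q, hq, hqz⟩ := exists_norm_eq_one_apply_eq_one hz
    calc p (x - z) ≤ p (x - z) + q (z - x) :=
          le_add_of_nonneg_right (apply_sub_nonneg_of_apply_eq_one hq.le hqz hx.le)
      _ = (p - q) (x - z) := (sub_apply_sub_eq_add p q x z).symm
      _ ≤ gammaPlus X ε := le_gammaPlus hx hz hxz hp hpx hq hqz
  · refine gammaPlus_le (mul_nonneg zero_le_two phiPlus_nonneg)
      fun x₁ x₂ p₁ p₂ hx₁ hx₂ hxx hp₁ hp₁x hp₂ hp₂x => ?_
    rw [sub_apply_sub_eq_add, two_mul]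
    exact add_le_add (le_phiPlus hx₁ hx₂ hxx hp₁ hp₁x)
      (le_phiPlus hx₂ hx₁ (by rwa [norm_sub_rev]) hp₂ hp₂x)

theorem stmt16 {X : Type*} [NormedAddCommGroup X] [NormedSpace ℝ X] [CompleteSpace X]
    (ε : ℝ) (hε : ε ∈ Set.Icc (0:ℝ) 2) :
    phiPlus X ε ≤ gammaPlus X ε ∧ gammaPlus X ε ≤ 2 * phiPlus X ε :=
  stmt16_general ε
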